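/- Under the distributed two-time-scale setup, for every k ≥ 0 the Frobenius norms of the consensus-error matrices satisfy ‖Ŷ_{k+1}‖ ≤ (σ + β_k)·‖Ŷ_k‖ + β_k·‖X̂_k‖ + √N·(R + C)·β_k. -/

import Mathlib

/-- The Euclidean norm of a vector (represented as a function into `ℝ`). -/
noncomputable def enorm {n : ℕ} (v : Fin n → ℝ) : ℝ :=
  Real.sqrt (∑ i, v i ^ 2)

/-- The Frobenius norm of an `N×d` real matrix. -/
noncomputable def fnorm {N d : ℕ} (M : Matrix (Fin N) (Fin d) ℝ) : ℝ :=
  Real.sqrt (∑ i, ∑ j, M i j ^ 2)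

/-!
Write `J = I - (1/N) 𝟙𝟙ᵀ` for the centering matrix, so that `Ŷ_k = J Y_k`. Because `V` is doubly
stochastic, `J` commutes with `V`, hence `Ŷ_{k+1} = V Ŷ_k - β_k J G_k` with
`G_k = X_k A21ᵀ + Y_k A22ᵀ - B2 + Ψ_k`. The columns of `Ŷ_k` sum to zero, so `V` shrinks each of
them by the factor `σ`. Moreover `J G_k = X̂_k A21ᵀ + Ŷ_k A22ᵀ - J B2 + J Ψ_k`; multiplying by `Aᵀ`
on the right acts row by row and `J` is a contraction, so `‖J G_k‖ ≤ ‖X̂_k‖ + ‖Ŷ_k‖ + √N (R + C)`.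
-/

open Matrix

section Frobenius

attribute [local instance] Matrix.frobeniusNormedAddCommGroup Matrix.frobeniusNormedSpace

variable {N d : ℕ}

lemma fnorm_eq_norm (M : Matrix (Fin N) (Fin d) ℝ) : fnorm M = ‖M‖ := by
  simp [fnorm, frobenius_norm_def, Real.sqrt_eq_rpow, sq_abs]

lemma fnorm_sub_smul_le {c : ℝ} (hc : 0 ≤ c) (A B : Matrix (Fin N) (Fin d) ℝ) :
    fnorm (A - c • B) ≤ fnorm A + c * fnorm B := by
  simpa only [fnorm_eq_norm, norm_smul, Real.norm_eq_abs, abs_of_nonneg hc]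
    using norm_sub_le A (c • B)

lemma fnorm_add_sub_add_le (A B C D : Matrix (Fin N) (Fin d) ℝ) :
    fnorm (A + B - C + D) ≤ fnorm A + fnorm B + fnorm C + fnorm D := by
  simp only [fnorm_eq_norm]
  linarith [norm_add_le (A + B - C) D, norm_sub_le (A + B) C, norm_add_le A B]

lemma fnorm_transpose (A : Matrix (Fin N) (Fin d) ℝ) : fnorm Aᵀ = fnorm A := by
  simp only [fnorm_eq_norm, frobenius_norm_transpose]

end Frobenius

section RowsAndColumns

variable {N d e : ℕ}

lemma enorm_nonneg (v : Fin N → ℝ) : 0 ≤ _root_.enorm v := Real.sqrt_nonneg _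

lemma fnorm_nonneg (M : Matrix (Fin N) (Fin d) ℝ) : 0 ≤ fnorm M := Real.sqrt_nonneg _

lemma fnorm_sq (M : Matrix (Fin N) (Fin d) ℝ) : fnorm M ^ 2 = ∑ i, _root_.enorm (M i) ^ 2 := by
  simp only [fnorm, _root_.enorm]
  rw [Real.sq_sqrt (by positivity)]
  exact Finset.sum_congr rfl fun i _ => (Real.sq_sqrt (by positivity)).symm

lemma fnorm_le_mul_of_enorm_row_le {c : ℝ} (hc : 0 ≤ c) {A : Matrix (Fin N) (Fin d) ℝ}
    {B : Matrix (Fin N) (Fin e) ℝ} (h : ∀ i, _root_.enorm (A i) ≤ c * _root_.enorm (B i)) :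
    fnorm A ≤ c * fnorm B := by
  have hB := fnorm_nonneg B
  rw [← pow_le_pow_iff_left₀ (fnorm_nonneg A) (by positivity) two_ne_zero, mul_pow, fnorm_sq,
    fnorm_sq, Finset.mul_sum]
  gcongr with i
  rw [← mul_pow]
  exact pow_le_pow_left₀ (enorm_nonneg _) (h i) 2

lemma fnorm_mul_transpose_le {A : Matrix (Fin d) (Fin e) ℝ}
    (hA : ∀ v, _root_.enorm (A *ᵥ v) ≤ _root_.enorm v) (M : Matrix (Fin N) (Fin e) ℝ) :
    fnorm (M * Aᵀ) ≤ fnorm M := by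
  simpa using fnorm_le_mul_of_enorm_row_le zero_le_one (A := M * Aᵀ) (B := M) fun i => by
    simpa [mul_apply_eq_vecMul, vecMul_transpose] using hA (M i)

lemma fnorm_mul_le_mul_of_enorm_col_le {c : ℝ} (hc : 0 ≤ c) {V : Matrix (Fin e) (Fin N) ℝ}
    {M : Matrix (Fin N) (Fin d) ℝ} (h : ∀ j, _root_.enorm (V *ᵥ Mᵀ j) ≤ c * _root_.enorm (Mᵀ j)) :
    fnorm (V * M) ≤ c * fnorm M := by
  rw [← fnorm_transpose, ← fnorm_transpose M, transpose_mul]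
  refine fnorm_le_mul_of_enorm_row_le hc fun j => ?_
  rw [mul_apply_eq_vecMul, vecMul_transpose]
  exact h j

lemma fnorm_le_sqrt_mul_of_enorm_row_le {R : ℝ} (hR : 0 ≤ R) {M : Matrix (Fin N) (Fin d) ℝ}
    (h : ∀ i, _root_.enorm (M i) ≤ R) : fnorm M ≤ Real.sqrt N * R := by
  rw [← pow_le_pow_iff_left₀ (fnorm_nonneg M) (by positivity) two_ne_zero, mul_pow,
    Real.sq_sqrt N.cast_nonneg, fnorm_sq]
  calc ∑ i, _root_.enorm (M i) ^ 2 ≤ ∑ _i : Fin N, R ^ 2 := by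
        gcongr with i
        exacts [enorm_nonneg _, h i]
    _ = N * R ^ 2 := by simp

end RowsAndColumns

section Centering

variable {N d : ℕ}

noncomputable def centering (N : ℕ) : Matrix (Fin N) (Fin N) ℝ := 1 - (N : ℝ)⁻¹ • of fun _ _ => 1

lemma centering_mulVec_apply (v : Fin N → ℝ) (i : Fin N) :
    (centering N *ᵥ v) i = v i - (N : ℝ)⁻¹ * ∑ l, v l := by
  rw [centering, sub_mulVec, one_mulVec, smul_mulVec]
  simp [mulVec, dotProduct]

lemma centering_mul_apply (M : Matrix (Fin N) (Fin d) ℝ) (i : Fin N) (j : Fin d) :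
    (centering N * M) i j = M i j - (N : ℝ)⁻¹ * ∑ l, M l j := by
  rw [centering, Matrix.sub_mul, Matrix.one_mul, Matrix.smul_mul]
  simp [mul_apply]

lemma centering_mul_of (z : Fin N → Fin d → ℝ) :
    centering N * of z = of fun i j => z i j - ((1 / N : ℝ) • ∑ l, z l) j := by
  ext i j
  simp [centering_mul_apply, Finset.sum_apply]

lemma sum_centering_mul_apply (M : Matrix (Fin N) (Fin d) ℝ) (j : Fin d) :
    ∑ i, (centering N * M) i j = 0 := by
  rcases Nat.eq_zero_or_pos N with rfl | hN
  · simp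
  · simp only [centering_mul_apply, Finset.sum_sub_distrib, Finset.sum_const, Finset.card_univ,
      Fintype.card_fin, nsmul_eq_mul]
    field_simp
    ring

lemma enorm_centering_mulVec_le (v : Fin N → ℝ) :
    _root_.enorm (centering N *ᵥ v) ≤ _root_.enorm v := by
  refine Real.sqrt_le_sqrt ?_
  rcases Nat.eq_zero_or_pos N with rfl | hN
  · simp
  set m := (N : ℝ)⁻¹ * ∑ l, v l
  have hsum : ∑ l, v l = N * m := by
    simp only [m]; field_simp
  calc ∑ i, (centering N *ᵥ v) i ^ 2 = ∑ i, v i ^ 2 - N * m ^ 2 := by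
        simp only [centering_mulVec_apply, sub_sq, Finset.sum_add_distrib, Finset.sum_sub_distrib,
          ← Finset.sum_mul, ← Finset.mul_sum, hsum, Finset.sum_const, Finset.card_univ,
          Fintype.card_fin, nsmul_eq_mul]
        field_simp
        ring
    _ ≤ ∑ i, v i ^ 2 := sub_le_self _ (by positivity)

lemma fnorm_centering_mul_le (M : Matrix (Fin N) (Fin d) ℝ) :
    fnorm (centering N * M) ≤ fnorm M := by
  simpa using fnorm_mul_le_mul_of_enorm_col_le zero_le_one fun j => by
    simpa using enorm_centering_mulVec_le (Mᵀ j)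

lemma centering_mul_comm {V : Matrix (Fin N) (Fin N) ℝ} (hrow : ∀ i, ∑ j, V i j = 1)
    (hcol : ∀ j, ∑ i, V i j = 1) : centering N * V = V * centering N := by
  rw [centering, Matrix.sub_mul, Matrix.mul_sub, Matrix.one_mul, Matrix.mul_one, Matrix.smul_mul,
    Matrix.mul_smul]
  congr 2
  ext i j
  simp [mul_apply, hrow, hcol]

lemma centering_mul_consensus_step {V : Matrix (Fin N) (Fin N) ℝ} (hrow : ∀ i, ∑ j, V i j = 1)
    (hcol : ∀ j, ∑ i, V i j = 1) (Y G : Matrix (Fin N) (Fin d) ℝ) (β : ℝ) :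
    centering N * (V * Y - β • G) = V * (centering N * Y) - β • (centering N * G) := by
  rw [Matrix.mul_sub, ← Matrix.mul_assoc, centering_mul_comm hrow hcol, Matrix.mul_assoc,
    Matrix.mul_smul]

end Centering

theorem stmt_7_general
    {N d : ℕ} (R C : ℝ) (hR : 0 ≤ R) (hC : 0 ≤ C)
    (V : Matrix (Fin N) (Fin N) ℝ)
    (hVrow : ∀ i, ∑ j, V i j = 1)
    (hVcol : ∀ j, ∑ i, V i j = 1)
    (σ : ℝ) (hσ0 : 0 < σ)
    (hVcontract : ∀ v : Fin N → ℝ, (∑ i, v i = 0) → _root_.enorm (V.mulVec v) ≤ σ * _root_.enorm v)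
    (A21 A22 : Matrix (Fin d) (Fin d) ℝ)
    (hA21 : ∀ v, _root_.enorm (A21.mulVec v) ≤ _root_.enorm v)
    (hA22 : ∀ v, _root_.enorm (A22.mulVec v) ≤ _root_.enorm v)
    (b2 : Fin N → Fin d → ℝ)
    (hb2 : ∀ i, _root_.enorm (b2 i) ≤ R)
    (ψ : ℕ → Fin N → Fin d → ℝ)
    (hψ : ∀ k i, _root_.enorm (ψ k i) ≤ C)
    (β0 : ℝ) (hβ0 : 0 < β0)
    (β : ℕ → ℝ)
    (hβ : ∀ k, β k = β0 / ((k : ℝ) + 1))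
    (x y : ℕ → Fin N → Fin d → ℝ)
    (hyrec : ∀ k i, y (k + 1) i =
      (∑ j, V i j • y k j) -
        β k • (A21.mulVec (x k i) + A22.mulVec (y k i) - b2 i + ψ k i))
    (xbar ybar : ℕ → Fin d → ℝ)
    (hxbar : ∀ k, xbar k = (1 / (N : ℝ)) • ∑ i, x k i)
    (hybar : ∀ k, ybar k = (1 / (N : ℝ)) • ∑ i, y k i)
    (Xhat Yhat : ℕ → Matrix (Fin N) (Fin d) ℝ)
    (hXhat : ∀ k, Xhat k = Matrix.of fun i j => x k i j - xbar k j)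
    (hYhat : ∀ k, Yhat k = Matrix.of fun i j => y k i j - ybar k j)
    (k : ℕ) :
    fnorm (Yhat (k + 1)) ≤ (σ + β k) * fnorm (Yhat k) + β k * fnorm (Xhat k)
      + Real.sqrt N * (R + C) * β k := by
  have hβk : 0 ≤ β k := by rw [hβ]; positivity
  have hX : Xhat k = centering N * of (x k) := by rw [hXhat, hxbar, centering_mul_of]
  have hY : ∀ k, Yhat k = centering N * of (y k) := fun k => by
    rw [hYhat, hybar, centering_mul_of]
  have hstep : of (y (k + 1)) = V * of (y k) -
      β k • (of (x k) * A21ᵀ + of (y k) * A22ᵀ - of b2 + of (ψ k)) := by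
    ext i j
    simp [hyrec, mul_apply, Finset.sum_apply, mulVec, dotProduct, mul_comm]
  set G := Xhat k * A21ᵀ + Yhat k * A22ᵀ - centering N * of b2 + centering N * of (ψ k)
  have hYsucc : Yhat (k + 1) = V * Yhat k - β k • G := by
    rw [hY, hstep, centering_mul_consensus_step hVrow hVcol, ← hY]
    simp only [G, hX, hY k, Matrix.mul_add, Matrix.mul_sub, Matrix.mul_assoc]
  have hVY : fnorm (V * Yhat k) ≤ σ * fnorm (Yhat k) :=
    fnorm_mul_le_mul_of_enorm_col_le hσ0.le fun j =>
      hVcontract _ (by simpa [hY] using sum_centering_mul_apply (of (y k)) j)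
  have hG : fnorm G ≤ fnorm (Xhat k) + fnorm (Yhat k) + Real.sqrt N * R + Real.sqrt N * C := by
    refine (fnorm_add_sub_add_le _ _ _ _).trans ?_
    gcongr
    · exact fnorm_mul_transpose_le hA21 _
    · exact fnorm_mul_transpose_le hA22 _
    · exact (fnorm_centering_mul_le _).trans (fnorm_le_sqrt_mul_of_enorm_row_le hR hb2)
    · exact (fnorm_centering_mul_le _).trans (fnorm_le_sqrt_mul_of_enorm_row_le hC (hψ k))
  calc fnorm (Yhat (k + 1)) ≤ fnorm (V * Yhat k) + β k * fnorm G :=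
        hYsucc ▸ fnorm_sub_smul_le hβk _ _
    _ ≤ σ * fnorm (Yhat k)
        + β k * (fnorm (Xhat k) + fnorm (Yhat k) + Real.sqrt N * R + Real.sqrt N * C) := by
        gcongr
    _ = (σ + β k) * fnorm (Yhat k) + β k * fnorm (Xhat k) + Real.sqrt N * (R + C) * β k := by
        ring

/-- Under the distributed two-time-scale setup, for every `k ≥ 0` the Frobenius
norms of the consensus-error matrices satisfy
`‖Ŷ_{k+1}‖ ≤ (σ + β_k)‖Ŷ_k‖ + β_k‖X̂_k‖ + √N(R+C)β_k`. -/
theorem stmt_7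
    {N d : ℕ} (hN : 0 < N) (hd : 0 < d) (R C : ℝ) (hR : 0 ≤ R) (hC : 0 ≤ C)
    (W V : Matrix (Fin N) (Fin N) ℝ)
    (hWnonneg : ∀ i j, 0 ≤ W i j) (hWrow : ∀ i, ∑ j, W i j = 1)
    (hWcol : ∀ j, ∑ i, W i j = 1)
    (hVnonneg : ∀ i j, 0 ≤ V i j) (hVrow : ∀ i, ∑ j, V i j = 1)
    (hVcol : ∀ j, ∑ i, V i j = 1)
    (σ : ℝ) (hσ0 : 0 < σ) (hσ1 : σ < 1)
    (hWcontract : ∀ v : Fin N → ℝ, (∑ i, v i = 0) → _root_.enorm (W.mulVec v) ≤ σ * _root_.enorm v)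
    (hVcontract : ∀ v : Fin N → ℝ, (∑ i, v i = 0) → _root_.enorm (V.mulVec v) ≤ σ * _root_.enorm v)
    (A11 A12 A21 A22 : Matrix (Fin d) (Fin d) ℝ)
    (hA11 : ∀ v, _root_.enorm (A11.mulVec v) ≤ _root_.enorm v)
    (hA12 : ∀ v, _root_.enorm (A12.mulVec v) ≤ _root_.enorm v)
    (hA21 : ∀ v, _root_.enorm (A21.mulVec v) ≤ _root_.enorm v)
    (hA22 : ∀ v, _root_.enorm (A22.mulVec v) ≤ _root_.enorm v)
    (b1 b2 : Fin N → Fin d → ℝ)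
    (hb1 : ∀ i, _root_.enorm (b1 i) ≤ R) (hb2 : ∀ i, _root_.enorm (b2 i) ≤ R)
    (ξ ψ : ℕ → Fin N → Fin d → ℝ)
    (hξ : ∀ k i, _root_.enorm (ξ k i) ≤ C) (hψ : ∀ k i, _root_.enorm (ψ k i) ≤ C)
    (α0 β0 : ℝ) (hβ0 : 0 < β0) (hβα : β0 ≤ α0)
    (α β : ℕ → ℝ)
    (hα : ∀ k, α k = α0 / ((k : ℝ) + 1) ^ ((2 : ℝ) / 3))
    (hβ : ∀ k, β k = β0 / ((k : ℝ) + 1))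
    (x y : ℕ → Fin N → Fin d → ℝ)
    (hx0 : ∀ i, x 0 i = 0) (hy0 : ∀ i, y 0 i = 0)
    (hxrec : ∀ k i, x (k + 1) i =
      (∑ j, W i j • x k j) -
        α k • (A11.mulVec (x k i) + A12.mulVec (y k i) - b1 i + ξ k i))
    (hyrec : ∀ k i, y (k + 1) i =
      (∑ j, V i j • y k j) -
        β k • (A21.mulVec (x k i) + A22.mulVec (y k i) - b2 i + ψ k i))
    (xbar ybar : ℕ → Fin d → ℝ)
    (hxbar : ∀ k, xbar k = (1 / (N : ℝ)) • ∑ i, x k i)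
    (hybar : ∀ k, ybar k = (1 / (N : ℝ)) • ∑ i, y k i)
    (Xhat Yhat : ℕ → Matrix (Fin N) (Fin d) ℝ)
    (hXhat : ∀ k, Xhat k = Matrix.of fun i j => x k i j - xbar k j)
    (hYhat : ∀ k, Yhat k = Matrix.of fun i j => y k i j - ybar k j)
    (k : ℕ) :
    fnorm (Yhat (k + 1)) ≤ (σ + β k) * fnorm (Yhat k) + β k * fnorm (Xhat k)
      + Real.sqrt N * (R + C) * β k :=
  stmt_7_general R C hR hC V hVrow hVcol σ hσ0 hVcontract A21 A22 hA21 hA22 b2 hb2 ψ hψ β0 hβ0 β hβ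
    x y hyrec xbar ybar hxbar hybar Xhat Yhat hXhat hYhat k
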